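/- System W satisfies (Rel): for any consistent belief base with syntax splitting Δ = Δ1 ∪_{Σ1,Σ2} Δ2, for i = 1,2, and for any propositional formulas A, B over Σ_i, we have A |~_Δ^w B if and only if A |~_{Δ_i}^w B (where Δ_i is regarded as a belief base over the full signature Σ). -/
import Mathlib


open scoped Classical

namespace SysW

/-- Propositional formulas over a signature (set of atoms) `V`. -/
inductive PForm (V : Type) : Type
  | var (v : V)
  | tru
  | fls
  | neg (φ : PForm V)
  | conj (φ ψ : PForm V)
  | disj (φ ψ : PForm V)

/-- Evaluation of a formula in a world `ω : V → Bool`. -/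
def PForm.eval {V : Type} (ω : V → Bool) : PForm V → Bool
  | var v => ω v
  | tru => true
  | fls => false
  | neg φ => !(PForm.eval ω φ)
  | conj φ ψ => PForm.eval ω φ && PForm.eval ω ψ
  | disj φ ψ => PForm.eval ω φ || PForm.eval ω ψ

/-- The atoms occurring in a formula. -/
def PForm.vars {V : Type} : PForm V → Set V
  | var v => {v}
  | tru => ∅
  | fls => ∅
  | neg φ => PForm.vars φ
  | conj φ ψ => PForm.vars φ ∪ PForm.vars ψ
  | disj φ ψ => PForm.vars φ ∪ PForm.vars ψ

/-- A conditional (B|A): "if `ante` then usually `cons`". -/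
structure CondRule (V : Type) : Type where
  cons : PForm V
  ante : PForm V

/-- The atoms occurring in a conditional. -/
def condVars {V : Type} (r : CondRule V) : Set V := r.ante.vars ∪ r.cons.vars

/-- `ω` verifies (B|A) iff `ω ⊨ A ∧ B`. -/
def verifies {V : Type} (ω : V → Bool) (r : CondRule V) : Prop :=
  r.ante.eval ω = true ∧ r.cons.eval ω = true

/-- `ω` falsifies (B|A) iff `ω ⊨ A ∧ ¬B`. -/
def falsifies {V : Type} (ω : V → Bool) (r : CondRule V) : Prop :=
  r.ante.eval ω = true ∧ r.cons.eval ω = false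

/-- A conditional `r` is tolerated by a set of conditionals `S` if some world
verifies `r` and falsifies no conditional of `S`. -/
def Tolerated {V : Type} (S : Finset (CondRule V)) (r : CondRule V) : Prop :=
  ∃ ω : V → Bool, verifies ω r ∧ ∀ r' ∈ S, ¬ falsifies ω r'

/-- `rest Δ j` is what remains of `Δ` after removing the first `j` parts
`Δ^0, …, Δ^{j-1}` of the tolerance partition. -/
noncomputable def rest {V : Type} (Δ : Finset (CondRule V)) : ℕ → Finset (CondRule V)
  | 0 => Δ
  | j + 1 => (rest Δ j).filter (fun r => ¬ Tolerated (rest Δ j) r)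

/-- `part Δ j` is the part `Δ^j` of the inclusion-maximal tolerance partition of `Δ`:
the conditionals of `rest Δ j` tolerated by `rest Δ j`. -/
noncomputable def part {V : Type} (Δ : Finset (CondRule V)) (j : ℕ) : Finset (CondRule V) :=
  (rest Δ j).filter (fun r => Tolerated (rest Δ j) r)

/-- `Δ` is consistent iff the tolerance partitioning process exhausts `Δ`. -/
def Consistent {V : Type} (Δ : Finset (CondRule V)) : Prop :=
  ∃ n, rest Δ n = ∅

/-- The tolerance partition of `Δ` is `OP(Δ) = (Δ^0, …, Δ^k)`, i.e. the process
stops exactly after the part with index `k` (all parts `Δ^0, …, Δ^k` nonempty). -/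
def IsOPLength {V : Type} (Δ : Finset (CondRule V)) (k : ℕ) : Prop :=
  rest Δ (k + 1) = ∅ ∧ rest Δ k ≠ ∅

/-- `fpart Δ j ω` = `f_Δ^j(ω)`, the set of conditionals of `Δ^j` falsified by `ω`. -/
noncomputable def fpart {V : Type} (Δ : Finset (CondRule V)) (j : ℕ) (ω : V → Bool) :
    Finset (CondRule V) :=
  (part Δ j).filter (fun r => falsifies ω r)

/-- The preferred structure on worlds `ω ≺_Δ ω'`: there is `m` such that
`f_Δ^i(ω) = f_Δ^i(ω')` for all `i > m` and `f_Δ^m(ω) ⊊ f_Δ^m(ω')`.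
(For `i` beyond the last index `k` of the tolerance partition of a consistent `Δ`,
both sides are empty, so this agrees with the textbook definition.) -/
noncomputable def prefRel {V : Type} (Δ : Finset (CondRule V)) (ω ω' : V → Bool) : Prop :=
  ∃ m : ℕ, (∀ i, m < i → fpart Δ i ω = fpart Δ i ω') ∧ fpart Δ m ω ⊂ fpart Δ m ω'

/-- System W inference `A |~_Δ^w B`: for every world `ω' ⊨ A ∧ ¬B` there is a
world `ω ⊨ A ∧ B` with `ω ≺_Δ ω'`. -/
noncomputable def SysWInf {V : Type} (Δ : Finset (CondRule V)) (A B : PForm V) : Prop :=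
  ∀ ω' : V → Bool, A.eval ω' = true ∧ B.eval ω' = false →
    ∃ ω : V → Bool, (A.eval ω = true ∧ B.eval ω = true) ∧ prefRel Δ ω ω'

/-- `Δ = Δ1 ∪_{Sig1,Sig2} Δ2`: `{Sig1, Sig2}` is a partition of the signature, `{Δ1, Δ2}`
partitions `Δ`, and every conditional of `Δi` uses only atoms from `Σi`. -/
def SyntaxSplitting {V : Type} (Sig1 Sig2 : Set V) (Δ Δ1 Δ2 : Finset (CondRule V)) : Prop :=
  Sig1 ∪ Sig2 = Set.univ ∧ Disjoint Sig1 Sig2 ∧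
  Δ = Δ1 ∪ Δ2 ∧ Disjoint Δ1 Δ2 ∧
  (∀ r ∈ Δ1, condVars r ⊆ Sig1) ∧ (∀ r ∈ Δ2, condVars r ⊆ Sig2)

end SysW

namespace SysW

variable {V : Type}

/-! ### Evaluation depends only on the occurring variables -/

theorem eval_congr {ω ω' : V → Bool} : ∀ φ : PForm V,
    (∀ v ∈ φ.vars, ω v = ω' v) → φ.eval ω = φ.eval ω'
  | .var v, h => h v (by simp [PForm.vars])
  | .tru, _ => rfl
  | .fls, _ => rfl
  | .neg φ, h => by simp only [PForm.eval]; rw [eval_congr φ h]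
  | .conj φ ψ, h => by
      simp only [PForm.eval]
      rw [eval_congr φ (fun v hv => h v (Set.mem_union_left _ hv)),
        eval_congr ψ (fun v hv => h v (Set.mem_union_right _ hv))]
  | .disj φ ψ, h => by
      simp only [PForm.eval]
      rw [eval_congr φ (fun v hv => h v (Set.mem_union_left _ hv)),
        eval_congr ψ (fun v hv => h v (Set.mem_union_right _ hv))]

theorem verifies_congr {ω ω' : V → Bool} {r : CondRule V}
    (h : ∀ v ∈ condVars r, ω v = ω' v) : verifies ω r ↔ verifies ω' r := by
  unfold verifies
  rw [eval_congr r.ante (fun v hv => h v (Set.mem_union_left _ hv)),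
    eval_congr r.cons (fun v hv => h v (Set.mem_union_right _ hv))]

theorem falsifies_congr {ω ω' : V → Bool} {r : CondRule V}
    (h : ∀ v ∈ condVars r, ω v = ω' v) : falsifies ω r ↔ falsifies ω' r := by
  unfold falsifies
  rw [eval_congr r.ante (fun v hv => h v (Set.mem_union_left _ hv)),
    eval_congr r.cons (fun v hv => h v (Set.mem_union_right _ hv))]

/-! ### Combining two worlds along a set of atoms -/

noncomputable def comb (S : Set V) (ω1 ω2 : V → Bool) : V → Bool :=
  fun v => if v ∈ S then ω1 v else ω2 v

theorem comb_mem {S : Set V} {ω1 ω2 : V → Bool} {v : V} (h : v ∈ S) :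
    comb S ω1 ω2 v = ω1 v := if_pos h

theorem comb_not_mem {S : Set V} {ω1 ω2 : V → Bool} {v : V} (h : v ∉ S) :
    comb S ω1 ω2 v = ω2 v := if_neg h

/-! ### Basic facts about `rest` -/

theorem rest_succ_subset (Δ : Finset (CondRule V)) (j : ℕ) :
    rest Δ (j + 1) ⊆ rest Δ j := Finset.filter_subset _ _

theorem rest_mono (Δ : Finset (CondRule V)) {i j : ℕ} (h : i ≤ j) :
    rest Δ j ⊆ rest Δ i := by
  induction j with
  | zero => rw [Nat.le_zero.mp h]
  | succ j ih =>
    rcases Nat.eq_or_lt_of_le h with rfl | hlt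
    · exact subset_rfl
    · exact (rest_succ_subset Δ j).trans (ih (Nat.lt_succ_iff.mp hlt))

theorem rest_subset (Δ : Finset (CondRule V)) (j : ℕ) : rest Δ j ⊆ Δ :=
  rest_mono Δ (Nat.zero_le j)

theorem rest_fixed {Δ : Finset (CondRule V)} {j : ℕ}
    (h : rest Δ (j + 1) = rest Δ j) : ∀ k, rest Δ (j + k) = rest Δ j
  | 0 => rfl
  | k + 1 => by
    have ih := rest_fixed h k
    show rest Δ ((j + k) + 1) = rest Δ j
    show (rest Δ (j + k)).filter (fun r => ¬ Tolerated (rest Δ (j + k)) r) = rest Δ j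
    rw [ih]
    exact h

theorem exists_nofals {Δ : Finset (CondRule V)} (hcons : Consistent Δ) (j : ℕ) :
    ∃ ω : V → Bool, ∀ r ∈ rest Δ j, ¬ falsifies ω r := by
  by_cases h : ∃ r ∈ rest Δ j, Tolerated (rest Δ j) r
  · obtain ⟨r, _, ω, _, hnf⟩ := h
    exact ⟨ω, hnf⟩
  · push_neg at h
    have hfix : rest Δ (j + 1) = rest Δ j := by
      show (rest Δ j).filter (fun r => ¬ Tolerated (rest Δ j) r) = rest Δ j
      exact Finset.filter_true_of_mem (fun r hr => h r hr)
    obtain ⟨n, hn⟩ := hcons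
    have h1 : rest Δ (j + n) = rest Δ j := rest_fixed hfix n
    have h2 : rest Δ (j + n) ⊆ rest Δ n := rest_mono Δ (Nat.le_add_left n j)
    have hΔe : rest Δ j = ∅ := by
      rw [← h1]
      exact Finset.subset_empty.mp (hn ▸ h2)
    exact ⟨fun _ => true, by simp [hΔe]⟩

/-! ### Splitting lemmas -/

theorem tol_split {Sig1 Sig2 : Set V} {Δ1 Δ2 : Finset (CondRule V)}
    (hD : Disjoint Sig1 Sig2)
    (h1 : ∀ r ∈ Δ1, condVars r ⊆ Sig1) (h2 : ∀ r ∈ Δ2, condVars r ⊆ Sig2)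
    {S1 S2 : Finset (CondRule V)} (hS1 : S1 ⊆ Δ1) (hS2 : S2 ⊆ Δ2)
    (hN2 : ∃ ω : V → Bool, ∀ r ∈ S2, ¬ falsifies ω r)
    {r : CondRule V} (hr : r ∈ Δ1) :
    Tolerated (S1 ∪ S2) r ↔ Tolerated S1 r := by
  constructor
  · rintro ⟨ω, hv, hnf⟩
    exact ⟨ω, hv, fun r' h' => hnf r' (Finset.mem_union_left _ h')⟩
  · rintro ⟨ω1, hv1, hnf1⟩
    obtain ⟨ω2, hnf2⟩ := hN2
    refine ⟨comb Sig1 ω1 ω2, ?_, ?_⟩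
    · exact (verifies_congr (fun v hv => comb_mem (h1 r hr hv))).mpr hv1
    · intro r' h'
      rcases Finset.mem_union.mp h' with h' | h'
      · exact fun hf => hnf1 r' h'
          ((falsifies_congr (fun v hv => comb_mem (h1 r' (hS1 h') hv))).mp hf)
      · exact fun hf => hnf2 r' h'
          ((falsifies_congr (fun v hv => comb_not_mem
            (Set.disjoint_right.mp hD (h2 r' (hS2 h') hv)))).mp hf)

theorem rest_split {Sig1 Sig2 : Set V} {Δ Δ1 Δ2 : Finset (CondRule V)}
    (hD : Disjoint Sig1 Sig2) (hΔ : Δ = Δ1 ∪ Δ2)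
    (h1 : ∀ r ∈ Δ1, condVars r ⊆ Sig1) (h2 : ∀ r ∈ Δ2, condVars r ⊆ Sig2)
    (hcons : Consistent Δ) :
    ∀ j, rest Δ j = rest Δ1 j ∪ rest Δ2 j := by
  intro j
  induction j with
  | zero => exact hΔ
  | succ j ih =>
    obtain ⟨ω, hω⟩ := exists_nofals hcons j
    have hN2 : ∃ ω : V → Bool, ∀ r ∈ rest Δ2 j, ¬ falsifies ω r :=
      ⟨ω, fun r' h' => hω r' (by rw [ih]; exact Finset.mem_union_right _ h')⟩
    have hN1 : ∃ ω : V → Bool, ∀ r ∈ rest Δ1 j, ¬ falsifies ω r :=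
      ⟨ω, fun r' h' => hω r' (by rw [ih]; exact Finset.mem_union_left _ h')⟩
    show (rest Δ j).filter (fun r => ¬ Tolerated (rest Δ j) r) = _
    rw [ih, Finset.filter_union]
    congr 1
    · exact Finset.filter_congr fun r hr => by
        rw [not_iff_not]
        exact tol_split hD h1 h2 (rest_subset Δ1 j) (rest_subset Δ2 j) hN2
          (rest_subset Δ1 j hr)
    · exact Finset.filter_congr fun r hr => by
        rw [not_iff_not, Finset.union_comm (rest Δ1 j) (rest Δ2 j)]
        exact tol_split hD.symm h2 h1 (rest_subset Δ2 j) (rest_subset Δ1 j) hN1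
          (rest_subset Δ2 j hr)

theorem part_split {Sig1 Sig2 : Set V} {Δ Δ1 Δ2 : Finset (CondRule V)}
    (hD : Disjoint Sig1 Sig2) (hΔ : Δ = Δ1 ∪ Δ2)
    (h1 : ∀ r ∈ Δ1, condVars r ⊆ Sig1) (h2 : ∀ r ∈ Δ2, condVars r ⊆ Sig2)
    (hcons : Consistent Δ) (j : ℕ) :
    part Δ j = part Δ1 j ∪ part Δ2 j := by
  have ih := rest_split hD hΔ h1 h2 hcons j
  obtain ⟨ω, hω⟩ := exists_nofals hcons j
  have hN2 : ∃ ω : V → Bool, ∀ r ∈ rest Δ2 j, ¬ falsifies ω r :=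
    ⟨ω, fun r' h' => hω r' (by rw [ih]; exact Finset.mem_union_right _ h')⟩
  have hN1 : ∃ ω : V → Bool, ∀ r ∈ rest Δ1 j, ¬ falsifies ω r :=
    ⟨ω, fun r' h' => hω r' (by rw [ih]; exact Finset.mem_union_left _ h')⟩
  unfold part
  rw [ih, Finset.filter_union]
  congr 1
  · exact Finset.filter_congr fun r hr =>
      tol_split hD h1 h2 (rest_subset Δ1 j) (rest_subset Δ2 j) hN2 (rest_subset Δ1 j hr)
  · exact Finset.filter_congr fun r hr => by
      rw [Finset.union_comm (rest Δ1 j) (rest Δ2 j)]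
      exact tol_split hD.symm h2 h1 (rest_subset Δ2 j) (rest_subset Δ1 j) hN1
        (rest_subset Δ2 j hr)

theorem part_subset (Δ : Finset (CondRule V)) (j : ℕ) : part Δ j ⊆ Δ :=
  (Finset.filter_subset _ _).trans (rest_subset Δ j)

theorem fpart_subset (Δ : Finset (CondRule V)) (j : ℕ) (ω : V → Bool) :
    fpart Δ j ω ⊆ Δ :=
  (Finset.filter_subset _ _).trans (part_subset Δ j)

theorem fpart_split {Sig1 Sig2 : Set V} {Δ Δ1 Δ2 : Finset (CondRule V)}
    (hD : Disjoint Sig1 Sig2) (hΔ : Δ = Δ1 ∪ Δ2)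
    (h1 : ∀ r ∈ Δ1, condVars r ⊆ Sig1) (h2 : ∀ r ∈ Δ2, condVars r ⊆ Sig2)
    (hcons : Consistent Δ) (j : ℕ) (ω : V → Bool) :
    fpart Δ j ω = fpart Δ1 j ω ∪ fpart Δ2 j ω := by
  unfold fpart
  rw [part_split hD hΔ h1 h2 hcons j, Finset.filter_union]

theorem fpart_congr {Sig1 : Set V} {Δ1 : Finset (CondRule V)}
    (h1 : ∀ r ∈ Δ1, condVars r ⊆ Sig1) {ω ω' : V → Bool}
    (h : ∀ v ∈ Sig1, ω v = ω' v) (j : ℕ) :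
    fpart Δ1 j ω = fpart Δ1 j ω' := by
  unfold fpart
  exact Finset.filter_congr fun r hr =>
    falsifies_congr (fun v hv => h v (h1 r (part_subset Δ1 j hr) hv))

/-! ### Finset helpers -/

theorem union_ssubset_union {α : Type _} [DecidableEq α] {a b c D1 D2 : Finset α}
    (hab : a ⊂ b) (hb : b ⊆ D1) (hc : c ⊆ D2) (hd : Disjoint D1 D2) :
    a ∪ c ⊂ b ∪ c := by
  rw [Finset.ssubset_iff_of_subset (Finset.union_subset_union_left hab.subset)]
  obtain ⟨x, hxb, hxa⟩ := Finset.exists_of_ssubset hab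
  refine ⟨x, Finset.mem_union_left _ hxb, ?_⟩
  rw [Finset.mem_union]
  rintro (h | h)
  · exact hxa h
  · exact (Finset.disjoint_left.mp hd (hb hxb)) (hc h)

theorem eq_of_union_eq {α : Type _} [DecidableEq α] {X Y Z D1 D2 : Finset α}
    (hX : X ⊆ D1) (hY : Y ⊆ D2) (hZ : Z ⊆ D1) (hd : Disjoint D1 D2)
    (h : X ∪ Y = Z) : X = Z := by
  ext x
  constructor
  · intro hx
    have hx' : x ∈ X ∪ Y := Finset.mem_union_left _ hx
    rwa [h] at hx'
  · intro hx
    have hx' : x ∈ X ∪ Y := by rw [h]; exact hx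
    rcases Finset.mem_union.mp hx' with h' | h'
    · exact h'
    · exact absurd (hZ hx) (Finset.disjoint_right.mp hd (hY h'))

/-! ### Main lemma (one half) -/

theorem main_half {Sig1 Sig2 : Set V} {Δ Δ1 Δ2 : Finset (CondRule V)}
    (hD : Disjoint Sig1 Sig2) (hΔ : Δ = Δ1 ∪ Δ2) (hdd : Disjoint Δ1 Δ2)
    (h1 : ∀ r ∈ Δ1, condVars r ⊆ Sig1) (h2 : ∀ r ∈ Δ2, condVars r ⊆ Sig2)
    (hcons : Consistent Δ) (A B : PForm V)
    (hA : A.vars ⊆ Sig1) (hB : B.vars ⊆ Sig1) :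
    SysWInf Δ A B ↔ SysWInf Δ1 A B := by
  have hfs : ∀ (j : ℕ) (ω0 : V → Bool), fpart Δ j ω0 = fpart Δ1 j ω0 ∪ fpart Δ2 j ω0 :=
    fun j ω0 => fpart_split hD hΔ h1 h2 hcons j ω0
  constructor
  · -- Δ ⇒ Δ1
    intro hinf ω' hω'
    obtain ⟨ω2, hω2⟩ := exists_nofals hcons 0
    have hagree1 : ∀ v ∈ Sig1, comb Sig1 ω' ω2 v = ω' v := fun v hv => comb_mem hv
    have hagree2 : ∀ v ∈ Sig2, comb Sig1 ω' ω2 v = ω2 v :=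
      fun v hv => comb_not_mem (Set.disjoint_right.mp hD hv)
    have hA'' : A.eval (comb Sig1 ω' ω2) = true := by
      rw [eval_congr A (fun v hv => hagree1 v (hA hv))]; exact hω'.1
    have hB'' : B.eval (comb Sig1 ω' ω2) = false := by
      rw [eval_congr B (fun v hv => hagree1 v (hB hv))]; exact hω'.2
    obtain ⟨ω, hAB, m, heq, hlt⟩ := hinf (comb Sig1 ω' ω2) ⟨hA'', hB''⟩
    have hf2 : ∀ i, fpart Δ2 i (comb Sig1 ω' ω2) = ∅ := by
      intro i
      rw [fpart_congr h2 hagree2 i]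
      apply Finset.filter_eq_empty_iff.mpr
      intro r hr
      refine hω2 r ?_
      show r ∈ Δ
      rw [hΔ]
      exact Finset.mem_union_right _ (part_subset Δ2 i hr)
    have hDω'' : ∀ i, fpart Δ i (comb Sig1 ω' ω2) = fpart Δ1 i ω' := by
      intro i
      rw [hfs i, fpart_congr h1 hagree1 i, hf2 i, Finset.union_empty]
    refine ⟨ω, hAB, m, ?_, ?_⟩
    · intro i hi
      have h := heq i hi
      rw [hDω'' i, hfs i] at h
      exact eq_of_union_eq (fpart_subset Δ1 i ω) (fpart_subset Δ2 i ω)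
        (fpart_subset Δ1 i ω') hdd h
    · have h := hlt
      rw [hDω'' m, hfs m] at h
      exact Finset.ssubset_of_subset_of_ssubset Finset.subset_union_left h
  · -- Δ1 ⇒ Δ
    intro hinf ω' hω'
    obtain ⟨ω, hAB, m, heq, hlt⟩ := hinf ω' hω'
    have hagree1 : ∀ v ∈ Sig1, comb Sig1 ω ω' v = ω v := fun v hv => comb_mem hv
    have hagree2 : ∀ v ∈ Sig2, comb Sig1 ω ω' v = ω' v :=
      fun v hv => comb_not_mem (Set.disjoint_right.mp hD hv)
    refine ⟨comb Sig1 ω ω', ⟨?_, ?_⟩, m, ?_, ?_⟩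
    · rw [eval_congr A (fun v hv => hagree1 v (hA hv))]; exact hAB.1
    · rw [eval_congr B (fun v hv => hagree1 v (hB hv))]; exact hAB.2
    · intro i hi
      rw [hfs i, hfs i, fpart_congr h1 hagree1 i, fpart_congr h2 hagree2 i, heq i hi]
    · rw [hfs m, hfs m, fpart_congr h1 hagree1 m, fpart_congr h2 hagree2 m]
      exact union_ssubset_union hlt (fpart_subset Δ1 m ω') (fpart_subset Δ2 m ω') hdd

end SysW

open SysW in
/-- System W satisfies (Rel): for a consistent belief base
`Δ = Δ1 ∪_{Σ1,Σ2} Δ2` with syntax splitting, for `i = 1,2` and formulas `A, B` over `Σi`,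
`A |~_Δ^w B` iff `A |~_{Δi}^w B`. -/
theorem stmt6 {V : Type} [Fintype V] (Sig1 Sig2 : Set V) (Δ Δ1 Δ2 : Finset (CondRule V))
    (hsplit : SyntaxSplitting Sig1 Sig2 Δ Δ1 Δ2) (hcons : Consistent Δ) :
    (∀ A B : PForm V, A.vars ⊆ Sig1 → B.vars ⊆ Sig1 → (SysWInf Δ A B ↔ SysWInf Δ1 A B)) ∧
    (∀ A B : PForm V, A.vars ⊆ Sig2 → B.vars ⊆ Sig2 → (SysWInf Δ A B ↔ SysWInf Δ2 A B)) := by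
  obtain ⟨hU, hD, hΔ, hdd, h1, h2⟩ := hsplit
  constructor
  · intro A B hA hB
    exact main_half hD hΔ hdd h1 h2 hcons A B hA hB
  · intro A B hA hB
    exact main_half hD.symm (by rw [Finset.union_comm]; exact hΔ) hdd.symm h2 h1 hcons A B hA hB
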